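/- arXiv:math/9612216 — 3 statements merged into one kernel-verified Lean document; each statement's English description precedes it below -/
import Mathlib

section
/- A nilpotent group N is torsionfree if and only if both its center C and the quotient N/C are torsionfree. -/
/-- The older Mathlib's `Monoid.IsTorsionFree` (removed since), restated with its old meaning. -/
def Monoid.IsTorsionFree (G : Type*) [Monoid G] : Prop :=
  ∀ g : G, g ≠ 1 → ¬IsOfFinOrder g

/-!
A torsion-free nilpotent group has unique roots: if `a ^ n = b ^ n` and `a⁻¹ * b` lies in the
`j`-th term of the lower central series, then `b * a * b⁻¹` is another `n`-th root of `a ^ n`,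
congruent to `a` modulo the `(j + 1)`-st term, so descending the series shows that `a` and `b`
commute, whence `(a⁻¹ * b) ^ n = 1` and `a = b`. With unique roots, if `x ^ n` is central then
every conjugate of `x` is an `n`-th root of `x ^ n`, so `x` itself is central; this makes
`N ⧸ center N` torsion-free. Conversely, torsion-freeness passes to any extension of a
torsion-free group by a torsion-free normal subgroup.
-/

namespace Monoid.IsTorsionFree

variable {G : Type*} [Group G]

theorem eq_one_of_pow_eq_one (hG : IsTorsionFree G) {g : G} {n : ℕ} (hn : n ≠ 0)
    (h : g ^ n = 1) : g = 1 :=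
  of_not_not fun hg ↦ hG g hg (isOfFinOrder_iff_pow_eq_one.2 ⟨n, n.pos_of_ne_zero hn, h⟩)

theorem of_pow_eq_one (h : ∀ (g : G) (n : ℕ), n ≠ 0 → g ^ n = 1 → g = 1) :
    IsTorsionFree G := fun g hg hfin ↦
  let ⟨n, hn, hpow⟩ := hfin.exists_pow_eq_one
  hg (h g n hn.ne' hpow)

theorem subgroup (hG : IsTorsionFree G) (H : Subgroup G) : IsTorsionFree H :=
  fun g hg hfin ↦ hG g (by simpa using hg) (Submonoid.isOfFinOrder_coe.2 hfin)

theorem of_quotient {H : Subgroup G} [H.Normal] (hH : IsTorsionFree H)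
    (hQ : IsTorsionFree (G ⧸ H)) : IsTorsionFree G :=
  of_pow_eq_one fun g n hn hg ↦ by
    have hgH : g ∈ H := (QuotientGroup.eq_one_iff g).1 <|
      hQ.eq_one_of_pow_eq_one hn <| by rw [← QuotientGroup.mk_pow, hg, QuotientGroup.mk_one]
    simpa using congrArg Subtype.val
      (hH.eq_one_of_pow_eq_one (g := ⟨g, hgH⟩) hn (Subtype.ext hg))

open scoped commutatorElement in
theorem eq_of_pow_eq_of_inv_mul_mem_lowerCentralSeries (hG : IsTorsionFree G) {n : ℕ}
    (hn : n ≠ 0) {j d : ℕ} (hd : (⊤ : Subgroup G).lowerCentralSeries (j + d) = ⊥) {a b : G}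
    (hab : a⁻¹ * b ∈ (⊤ : Subgroup G).lowerCentralSeries j) (h : a ^ n = b ^ n) : a = b := by
  induction d generalizing j a b with
  | zero =>
    rw [Nat.add_zero] at hd
    rwa [hd, Subgroup.mem_bot, inv_mul_eq_one] at hab
  | succ d ih =>
    have hconj_mem : a⁻¹ * (b * a * b⁻¹) ∈ (⊤ : Subgroup G).lowerCentralSeries (j + 1) := by
      rw [show a⁻¹ * (b * a * b⁻¹) = ⁅a⁻¹ * b, a⁆ by group, Subgroup.lowerCentralSeries_succ]
      exact Subgroup.commutator_mem_commutator hab (Subgroup.mem_top a)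
    have hconj_pow : a ^ n = (b * a * b⁻¹) ^ n := by
      rw [conj_pow, h]
      group
    have hconj : a = b * a * b⁻¹ :=
      ih (by rwa [show j + 1 + d = j + (d + 1) by omega]) hconj_mem hconj_pow
    have hcomm : Commute a b := eq_mul_inv_iff_mul_eq.1 hconj
    have hquot_pow : (a⁻¹ * b) ^ n = 1 := by
      rw [hcomm.inv_left.mul_pow, inv_pow, h, inv_mul_cancel]
    exact inv_mul_eq_one.1 (hG.eq_one_of_pow_eq_one hn hquot_pow)

theorem isMulTorsionFree [Group.IsNilpotent G] (hG : IsTorsionFree G) : IsMulTorsionFree G := by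
  obtain ⟨d, hd⟩ := Subgroup.nilpotent_iff_lowerCentralSeries.1 ‹Group.IsNilpotent G›
  exact ⟨fun n hn a b h ↦ hG.eq_of_pow_eq_of_inv_mul_mem_lowerCentralSeries hn (j := 0)
    (by rwa [zero_add]) (Subgroup.mem_top _) h⟩

end Monoid.IsTorsionFree

section IsMulTorsionFree

variable {G : Type*} [Group G] [IsMulTorsionFree G]

theorem Subgroup.mem_center_of_pow_mem_center {x : G} {n : ℕ} (hn : n ≠ 0)
    (hx : x ^ n ∈ Subgroup.center G) : x ∈ Subgroup.center G := by
  rw [Subgroup.mem_center_iff] at hx ⊢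
  intro y
  have hconj : y * x * y⁻¹ = x :=
    (pow_left_inj hn).1 (by rw [conj_pow, hx y, mul_inv_cancel_right])
  rw [← hconj, inv_mul_cancel_right, hconj]

theorem isTorsionFree_quotient_center : Monoid.IsTorsionFree (G ⧸ Subgroup.center G) :=
  .of_pow_eq_one fun g n hn hg ↦ by
    obtain ⟨x, rfl⟩ := QuotientGroup.mk_surjective g
    rw [← QuotientGroup.mk_pow, QuotientGroup.eq_one_iff] at hg
    exact (QuotientGroup.eq_one_iff x).2 (Subgroup.mem_center_of_pow_mem_center hn hg)

end IsMulTorsionFree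

/-- A nilpotent group `N` is torsionfree iff both its center `C` and the quotient
`N/C` are torsionfree. -/
theorem stmt_5 (N : Type*) [Group N] [Group.IsNilpotent N] :
    Monoid.IsTorsionFree N ↔
      Monoid.IsTorsionFree (Subgroup.center N) ∧
        Monoid.IsTorsionFree (N ⧸ Subgroup.center N) := by
  refine ⟨fun hN ↦ ?_, fun ⟨hC, hQ⟩ ↦ .of_quotient hC hQ⟩
  have := hN.isMulTorsionFree
  exact ⟨hN.subgroup _, isTorsionFree_quotient_center⟩
end

section
/- If N is nilpotent and g, h ∈ N have finite order, then the subgroup generated by g and h is finite. -/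
/-!
Induct on the nilpotency class of a group `G` generated by finitely many elements of finite
order. By induction `G ⧸ Z(G)` is finite; since a commutator `⁅a, b⁆` only depends on the classes
of `a` and `b` modulo the centre, `G` has finitely many commutators, so by Schur's theorem the
derived subgroup `G'` is finite. The abelianization `G ⧸ G'` is a finitely generated abelian
torsion group, hence finite, and therefore so is `G`.
-/

open Subgroup
open scoped commutatorElement

section Commutators

variable {G : Type*} [Group G]

theorem commutatorElement_mul_mem_center_right (a b : G) {z : G} (hz : z ∈ center G) :
    ⁅a, b * z⁆ = ⁅a, b⁆ := by
  have hcomm : ⁅a, z⁆ = 1 :=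
    commutatorElement_eq_one_iff_mul_comm.mpr (mem_center_iff.mp hz a)
  rw [commutatorElement_mul_right_eq_mul_conj, hcomm, mul_one, mul_inv_cancel_right]

theorem commutatorElement_mul_mem_center_left {a z : G} (hz : z ∈ center G) (b : G) :
    ⁅a * z, b⁆ = ⁅a, b⁆ := by
  rw [← commutatorElement_inv, commutatorElement_mul_mem_center_right b a hz,
    commutatorElement_inv]

theorem commutatorElement_eq_of_mk_eq_mk {a a' b b' : G}
    (ha : (a : G ⧸ center G) = a') (hb : (b : G ⧸ center G) = b') :
    ⁅a, b⁆ = ⁅a', b'⁆ := by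
  obtain ⟨z, hz, rfl⟩ : ∃ z ∈ center G, a * z = a' :=
    ⟨a⁻¹ * a', QuotientGroup.eq.mp ha, mul_inv_cancel_left a a'⟩
  obtain ⟨w, hw, rfl⟩ : ∃ w ∈ center G, b * w = b' :=
    ⟨b⁻¹ * b', QuotientGroup.eq.mp hb, mul_inv_cancel_left b b'⟩
  rw [commutatorElement_mul_mem_center_left hz, commutatorElement_mul_mem_center_right a b hw]

theorem finite_commutatorSet_of_finite_quotient_center [Finite (G ⧸ center G)] :
    Finite (commutatorSet G) := by
  have hsub : commutatorSet G ⊆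
      Set.range fun p : (G ⧸ center G) × (G ⧸ center G) => ⁅p.1.out, p.2.out⁆ := by
    rintro _ ⟨a, b, rfl⟩
    exact ⟨(a, b), (commutatorElement_eq_of_mk_eq_mk (Quotient.out_eq _).symm
      (Quotient.out_eq _).symm).symm⟩
  exact (Set.finite_range _).subset hsub

end Commutators

theorem Subgroup.closure_image_eq_top_of_surjective {G H : Type*} [Group G] [Group H]
    {f : G →* H} (hf : Function.Surjective f) {S : Set G} (hS : closure S = ⊤) :
    closure (f '' S) = ⊤ := by
  rw [← MonoidHom.map_closure, hS, map_top_of_surjective f hf]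

theorem CommGroup.finite_of_closure_eq_top_of_isOfFinOrder {G : Type*} [CommGroup G]
    {S : Set G} (hS : S.Finite) (hS_fin : ∀ x ∈ S, IsOfFinOrder x) (hS_top : closure S = ⊤) :
    Finite G := by
  have : Group.FG G := ⟨⟨hS.toFinset, by simpa using hS_top⟩⟩
  have hS_torsion : closure S ≤ CommGroup.torsion G := (closure_le _).mpr hS_fin
  exact CommGroup.finite_of_fg_isMulTorsion G fun x ↦ hS_torsion (hS_top ▸ mem_top x)

theorem Group.finite_of_isNilpotent_of_closure_eq_top_of_isOfFinOrder (G : Type*) [Group G]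
    [Group.IsNilpotent G] {S : Set G} (hS : S.Finite) (hS_fin : ∀ x ∈ S, IsOfFinOrder x)
    (hS_top : closure S = ⊤) : Finite G := by
  refine Group.nilpotent_center_quotient_ind (P := fun G _ _ ↦ ∀ S : Set G, S.Finite →
    (∀ x ∈ S, IsOfFinOrder x) → closure S = ⊤ → Finite G) G ?_ ?_ S hS hS_fin hS_top
  · intro G _ _ _ _ _ _
    exact Finite.of_subsingleton
  · intro G _ _ ih S hS hS_fin hS_top
    have : Finite (G ⧸ center G) :=
      ih _ (hS.image _)
        (Set.forall_mem_image.mpr fun x hx ↦ (QuotientGroup.mk' _).isOfFinOrder (hS_fin x hx))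
        (closure_image_eq_top_of_surjective (QuotientGroup.mk'_surjective _) hS_top)
    have : Finite (commutatorSet G) := finite_commutatorSet_of_finite_quotient_center
    have : Finite (G ⧸ commutator G) :=
      CommGroup.finite_of_closure_eq_top_of_isOfFinOrder (G := Abelianization G)
        (hS.image Abelianization.of)
        (Set.forall_mem_image.mpr fun x hx ↦ Abelianization.of.isOfFinOrder (hS_fin x hx))
        (closure_image_eq_top_of_surjective (QuotientGroup.mk'_surjective _) hS_top)
    exact Finite.of_subgroup_quotient (commutator G)

/-- If `N` is nilpotent and `g, h ∈ N` have finite order, then the subgroup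
generated by `g` and `h` is finite. -/
theorem stmt_6 (N : Type*) [Group N] [Group.IsNilpotent N]
    (g h : N) (hg : IsOfFinOrder g) (hh : IsOfFinOrder h) :
    Finite (Subgroup.closure ({g, h} : Set N)) := by
  set H := closure ({g, h} : Set N)
  refine Group.finite_of_isNilpotent_of_closure_eq_top_of_isOfFinOrder H
    (((Set.finite_singleton h).insert g).preimage Subtype.val_injective.injOn) ?_
    closure_closure_coe_preimage
  rintro x (hx | hx) <;> rw [← Submonoid.isOfFinOrder_coe]
  exacts [hx ▸ hg, hx ▸ hh]
end

section
/- If a nilpotent group is a free product G * H of two groups, then one of G or H is trivial. -/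
/-!
A nilpotent group is either trivial or has a nontrivial center. A free product of two nontrivial
groups is nontrivial but centerless: write `x ≠ 1` as a reduced word `w`. If `w` begins and ends
in the same factor, conjugating by a nontrivial letter `c` of another factor gives the reduced word
`c⁻¹ w c` with a different first letter. Otherwise conjugating the first letter `a` of `w` by `w`
gives the reduced word `w a w⁻¹`, which is longer than the one-letter word `a`.
-/

namespace Monoid.CoprodI

variable {ι : Type*} {M : ι → Type*} [∀ i, Group (M i)]

namespace NeWord

theorem head_ne_one : ∀ {i j} (w : NeWord M i j), w.head ≠ 1
  | _, _, .singleton _ h => h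
  | _, _, .append w₁ _ _ => head_ne_one w₁

theorem toList_eq_of_prod_eq {i j k l} {w₁ : NeWord M i j} {w₂ : NeWord M k l}
    (h : w₁.prod = w₂.prod) : w₁.toList = w₂.toList := by
  classical
  exact congrArg Word.toList (Word.equiv.symm.injective h)

theorem exists_prod_eq {x : CoprodI M} (hx : x ≠ 1) : ∃ i j, ∃ w : NeWord M i j, w.prod = x := by
  classical
  have hword : Word.equiv x ≠ Word.empty := fun h => hx (by
    rw [← Word.equiv.symm_apply_apply x, h]
    exact Word.prod_empty)
  obtain ⟨i, j, w, hw⟩ := of_word _ hword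
  exact ⟨i, j, w, by rw [prod, hw]; exact Word.equiv.symm_apply_apply x⟩

theorem not_commute_of_ne_of_ne {i j k} (w : NeWord M i j) (hki : k ≠ i) (hkj : k ≠ j)
    {c : M k} (hc : c ≠ 1) : ¬ Commute (of c) w.prod := by
  intro hcomm
  let W : NeWord M k k :=
    .append (.append (.singleton c⁻¹ (inv_ne_one.mpr hc)) hki w) hkj.symm (.singleton c hc)
  have hW : W.prod = w.prod := by
    simp only [W, append_prod, prod_singleton, map_inv]
    rw [mul_assoc, ← hcomm.eq, inv_mul_cancel_left]
  have hhead := congrArg List.head? (toList_eq_of_prod_eq hW)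
  simp only [toList_head?, Option.some.injEq, Sigma.mk.injEq] at hhead
  exact hki hhead.1

theorem not_commute_of_ne {i j} (w : NeWord M i j) (hij : i ≠ j) :
    ¬ Commute (of w.head) w.prod := by
  intro hcomm
  let W : NeWord M i i :=
    .append (.append w hij.symm (.singleton w.head (head_ne_one w))) hij w.inv
  have hW : W.prod = (NeWord.singleton w.head (head_ne_one w)).prod := by
    simp only [W, append_prod, prod_singleton, inv_prod, ← hcomm.eq, mul_inv_cancel_right]
  have hlen := congrArg List.length (toList_eq_of_prod_eq hW)
  have hpos : 0 < w.toList.length := List.length_pos_iff.mpr w.toList_ne_nil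
  simp only [W, toList, List.length_append, List.length_singleton] at hlen
  omega

end NeWord

theorem center_eq_bot {i₀ i₁ : ι} (hne : i₀ ≠ i₁) [Nontrivial (M i₀)] [Nontrivial (M i₁)] :
    Subgroup.center (CoprodI M) = ⊥ := by
  refine (Subgroup.eq_bot_iff_forall _).mpr fun x hx => ?_
  by_contra hx1
  obtain ⟨i, j, w, rfl⟩ := NeWord.exists_prod_eq hx1
  rw [Subgroup.mem_center_iff] at hx
  by_cases hij : i = j
  · subst hij
    obtain ⟨k, hk, c, hc⟩ : ∃ k ≠ i, ∃ c : M k, c ≠ 1 := by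
      rcases eq_or_ne i₀ i with rfl | h₀
      · exact ⟨i₁, hne.symm, exists_ne 1⟩
      · exact ⟨i₀, h₀, exists_ne 1⟩
    exact w.not_commute_of_ne_of_ne hk hk hc (hx _)
  · exact w.not_commute_of_ne hij (hx _)

theorem not_isNilpotent {i₀ i₁ : ι} (hne : i₀ ≠ i₁) [Nontrivial (M i₀)] [Nontrivial (M i₁)] :
    ¬ Group.IsNilpotent (CoprodI M) := fun _ =>
  haveI : Nontrivial (CoprodI M) := (of_injective (M := M) i₀).nontrivial
  Group.IsNilpotent.center_ne_bot _ (center_eq_bot (M := M) hne)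

end Monoid.CoprodI

namespace Monoid.Coprod

universe u v

/-- The reduced-word theory of free products is only available for `CoprodI`, so `G ∗ H` is
mapped onto the free product of this family; the `ULift`s put both factors in one universe. -/
def summands (G : Type u) (H : Type v) : Bool → Type (max u v)
  | true => ULift.{v} G
  | false => ULift.{u} H

instance (G : Type u) (H : Type v) [Group G] [Group H] : ∀ b, Group (summands G H b)
  | true => inferInstanceAs (Group (ULift G))
  | false => inferInstanceAs (Group (ULift H))

variable (G : Type u) (H : Type v) [Group G] [Group H]

def toCoprodI : G ∗ H →* CoprodI (summands G H) :=
  lift ((CoprodI.of (i := true)).comp MulEquiv.ulift.symm.toMonoidHom)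
    ((CoprodI.of (i := false)).comp MulEquiv.ulift.symm.toMonoidHom)

theorem toCoprodI_surjective : Function.Surjective (toCoprodI G H) := by
  rw [← MonoidHom.mrange_eq_top, eq_top_iff, ← CoprodI.iSup_mrange_of, iSup_le_iff]
  rintro (_ | _) _ ⟨m, rfl⟩
  · exact ⟨inr m.down, rfl⟩
  · exact ⟨inl m.down, rfl⟩

end Monoid.Coprod

/-- If a free product `G ∗ H` of two groups is nilpotent, then `G` or `H` is trivial. -/
theorem stmt_14 (G H : Type*) [Group G] [Group H]
    (h : Group.IsNilpotent (Monoid.Coprod G H)) :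
    Subsingleton G ∨ Subsingleton H := by
  by_contra! ⟨hG, hH⟩
  have : Nontrivial (Monoid.Coprod.summands G H true) := inferInstanceAs (Nontrivial (ULift G))
  have : Nontrivial (Monoid.Coprod.summands G H false) := inferInstanceAs (Nontrivial (ULift H))
  exact Monoid.CoprodI.not_isNilpotent (i₀ := true) (i₁ := false) (by decide)
    (Group.nilpotent_of_surjective _ (Monoid.Coprod.toCoprodI_surjective G H))
end
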